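/- arXiv:math/0306198 — 3 statements merged into one kernel-verified Lean document; each statement's English description precedes it below -/
import Mathlib

section
/- For two Young diagrams Y_α, Y_β, the Laurent polynomial N_{α,β}(t_1,t_2) := ∑_{s∈Y_α} t_1^{−l_{Y_β}(s)} t_2^{a_{Y_α}(s)+1} + ∑_{t∈Y_β} t_1^{l_{Y_α}(t)+1} t_2^{−a_{Y_β}(t)} satisfies the symmetry N_{α,β}(t_1,t_2) = t_1 t_2 · N_{β,α}(t_1^{−1}, t_2^{−1}). -/
noncomputable section

/-- The field ℚ(t₁,t₂); Laurent polynomial identities are stated via the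
canonical embedding ℤ[t₁^{±1},t₂^{±1}] ↪ ℚ(t₁,t₂). -/
abbrev K : Type := FractionRing (MvPolynomial (Fin 2) ℚ)

def t1 : K := algebraMap (MvPolynomial (Fin 2) ℚ) K (MvPolynomial.X 0)
def t2 : K := algebraMap (MvPolynomial (Fin 2) ℚ) K (MvPolynomial.X 1)

/-- Arm-length of `s = (i,j)` (0-indexed) in `Y`; may be negative outside `Y`. -/
def armLen (Y : YoungDiagram) (s : ℕ × ℕ) : ℤ := (Y.rowLen s.1 : ℤ) - s.2 - 1

/-- Leg-length of `s = (i,j)` (0-indexed) in `Y`; may be negative outside `Y`. -/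
def legLen (Y : YoungDiagram) (s : ℕ × ℕ) : ℤ := (Y.colLen s.2 : ℤ) - s.1 - 1

/-- `N_{α,β}(t₁,t₂) = ∑_{s∈Y_α} t₁^{−l_{Y_β}(s)} t₂^{a_{Y_α}(s)+1}
  + ∑_{t∈Y_β} t₁^{l_{Y_α}(t)+1} t₂^{−a_{Y_β}(t)}`. -/
def Nab (Ya Yb : YoungDiagram) (u v : K) : K :=
  (∑ s ∈ Ya.cells, u ^ (-(legLen Yb s)) * v ^ (armLen Ya s + 1)) +
    ∑ t ∈ Yb.cells, u ^ (legLen Ya t + 1) * v ^ (-(armLen Yb t))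

/-- `N_{α,β}(t₁,t₂) = t₁ t₂ · N_{β,α}(t₁⁻¹, t₂⁻¹)`. -/
theorem Nab_symm (Ya Yb : YoungDiagram) :
    Nab Ya Yb t1 t2 = t1 * t2 * Nab Yb Ya t1⁻¹ t2⁻¹ := by
  have h1 : t1 ≠ 0 := by
    simpa [t1] using (IsFractionRing.to_map_eq_zero_iff (K := K)).not.mpr
      (MvPolynomial.X_ne_zero (0 : Fin 2))
  have h2 : t2 ≠ 0 := by
    simpa [t2] using (IsFractionRing.to_map_eq_zero_iff (K := K)).not.mpr
      (MvPolynomial.X_ne_zero (1 : Fin 2))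
  have key : ∀ (m n : ℤ), t1 * t2 * (t1⁻¹ ^ m * t2⁻¹ ^ n)
      = t1 ^ (1 - m) * t2 ^ (1 - n) := by
    intro m n
    rw [inv_zpow, inv_zpow, ← zpow_neg, ← zpow_neg, zpow_sub₀ h1, zpow_sub₀ h2,
      zpow_one, zpow_one, zpow_neg, zpow_neg, div_eq_mul_inv, div_eq_mul_inv]
    ring
  simp only [Nab, mul_add, Finset.mul_sum, key]
  rw [add_comm]
  congr 1 <;> refine Finset.sum_congr rfl fun s _ => ?_ <;> congr 1 <;> congr 1 <;> ring
end
end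

section
/- For two Young diagrams Y_α, Y_β, the Laurent polynomial N_{α,β}(t_1,t_2) equals (t_1 + t_2 − 1 − t_1 t_2)·V_α^∗·V_β + V_β + t_1 t_2 V_α^∗, where V_α = ∑_{(i,j)∈Y_α} t_1^{1−i} t_2^{1−j}, V_α^∗ = ∑_{(i,j)∈Y_α} t_1^{i−1} t_2^{j−1}, and similarly for V_β. -/
noncomputable section

/-- `V_Y = ∑_{(i,j)∈Y} t₁^{1−i} t₂^{1−j}` (paper's 1-indexed convention, i.e.
`t₁^{−i} t₂^{−j}` over 0-indexed cells). -/
def V (Y : YoungDiagram) (u v : K) : K :=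
  ∑ s ∈ Y.cells, u ^ (-(s.1 : ℤ)) * v ^ (-(s.2 : ℤ))

/-- `V_Y^* = ∑_{(i,j)∈Y} t₁^{i−1} t₂^{j−1}` (1-indexed), i.e. `t₁^{i} t₂^{j}` over
0-indexed cells. -/
def Vstar (Y : YoungDiagram) (u v : K) : K :=
  ∑ s ∈ Y.cells, u ^ (s.1 : ℤ) * v ^ (s.2 : ℤ)

variable {F : Type*} [Field F]

/-- telescoping -/
lemma tele (v : F) (c : ℤ) (n : ℕ) :
    ∑ j ∈ Finset.range n, (v ^ (c - (j:ℤ)) - v ^ (c + 1 - (j:ℤ)))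
      = v ^ (c + 1 - (n:ℤ)) - v ^ (c + 1) := by
  induction n with
  | zero => simp
  | succ n ih =>
      rw [Finset.sum_range_succ, ih]
      push_cast
      rw [show c + 1 - ((n:ℤ) + 1) = c - n by ring]
      ring

lemma geomA (v : F) (hv : v ≠ 0) (n : ℕ) :
    (v - 1) * ∑ j ∈ Finset.range n, v ^ (j:ℤ) = v ^ (n:ℤ) - 1 := by
  induction n with
  | zero => simp
  | succ n ih =>
      rw [Finset.sum_range_succ, mul_add, ih]
      push_cast
      rw [zpow_add_one₀ hv]
      ring

lemma geomH (v : F) (hv : v ≠ 0) (m : ℕ) :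
    (v - 1) * ∑ k ∈ Finset.range m, v ^ (-(k:ℤ)) = v - v ^ (1 - (m:ℤ)) := by
  have h := tele v 0 m
  have : ∑ k ∈ Finset.range m, (v ^ (0 - (k:ℤ)) - v ^ (0 + 1 - (k:ℤ)))
      = ∑ k ∈ Finset.range m, ((v - 1) * v ^ (-(k:ℤ))) * (-1) := by
    refine Finset.sum_congr rfl fun k _ => ?_
    rw [show (0:ℤ) - k = -k by ring, show (0:ℤ) + 1 - k = 1 + -k by ring,
      zpow_add₀ hv, zpow_one]
    ring
  rw [this, ← Finset.sum_mul, ← Finset.mul_sum] at h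
  have h2 : (v - 1) * ∑ k ∈ Finset.range m, v ^ (-(k:ℤ))
      = -(v ^ (0 + 1 - (m:ℤ)) - v ^ ((0:ℤ) + 1)) := by
    rw [← h]; ring
  rw [h2]
  rw [show (0:ℤ) + 1 - m = 1 - m by ring]
  simp [zpow_one]

lemma reflect1 (v : F) (hv : v ≠ 0) (n : ℕ) :
    ∑ j ∈ Finset.range n, v ^ ((n:ℤ) - (j:ℤ)) = v * ∑ j ∈ Finset.range n, v ^ (j:ℤ) := by
  have h := Finset.sum_range_reflect (fun j => v ^ ((j:ℤ) + 1)) n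
  calc ∑ j ∈ Finset.range n, v ^ ((n:ℤ) - (j:ℤ))
      = ∑ j ∈ Finset.range n, v ^ ((j:ℤ) + 1) := by
        rw [← h]
        refine Finset.sum_congr rfl fun j hj => ?_
        rw [Finset.mem_range] at hj
        congr 1
        omega
    _ = v * ∑ j ∈ Finset.range n, v ^ (j:ℤ) := by
        rw [Finset.mul_sum]
        refine Finset.sum_congr rfl fun j hj => ?_
        rw [zpow_add_one₀ hv]
        ring

lemma reflect2 (v : F) (n : ℕ) :
    ∑ j ∈ Finset.range n, v ^ ((j:ℤ) + 1 - (n:ℤ)) = ∑ j ∈ Finset.range n, v ^ (-(j:ℤ)) := by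
  have h := Finset.sum_range_reflect (fun j => v ^ ((j:ℤ) + 1 - (n:ℤ))) n
  rw [← h]
  refine Finset.sum_congr rfl fun j hj => ?_
  rw [Finset.mem_range] at hj
  congr 1
  omega

lemma keyC (v : F) (hv : v ≠ 0) (a b : ℕ) :
    ∑ j ∈ Finset.range (min a b), (v ^ ((j:ℤ) + 1 - (b:ℤ)) - v ^ ((a:ℤ) - (j:ℤ)))
      = ∑ l ∈ Finset.range b, (v ^ (-(l:ℤ)) - v ^ ((a:ℤ) - (l:ℤ))) := by
  induction a with
  | zero =>
      simp only [Nat.zero_min, Finset.range_zero, Finset.sum_empty, Nat.cast_zero]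
      symm
      refine Finset.sum_eq_zero fun l _ => ?_
      rw [show (0:ℤ) - l = -l by ring]
      ring
  | succ a ih =>
      by_cases hab : b ≤ a
      · rw [show min (a+1) b = b by omega]
        rw [show min a b = b by omega] at ih
        have expand : ∑ j ∈ Finset.range b, (v ^ ((j:ℤ) + 1 - (b:ℤ)) - v ^ (((a:ℕ)+1:ℕ) - (j:ℤ)))
            = ∑ j ∈ Finset.range b, ((v ^ ((j:ℤ) + 1 - (b:ℤ)) - v ^ ((a:ℤ) - (j:ℤ)))
              + (v ^ ((a:ℤ) - (j:ℤ)) - v ^ ((a:ℤ) + 1 - (j:ℤ)))) := by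
          refine Finset.sum_congr rfl fun j _ => ?_
          push_cast
          ring
        rw [expand, Finset.sum_add_distrib, ih, tele v (a:ℤ) b]
        have rhs : ∑ l ∈ Finset.range b, (v ^ (-(l:ℤ)) - v ^ (((a:ℕ)+1:ℕ) - (l:ℤ)))
            = (∑ l ∈ Finset.range b, (v ^ (-(l:ℤ)) - v ^ ((a:ℤ) - (l:ℤ))))
              + (v ^ ((a:ℤ) + 1 - (b:ℤ)) - v ^ ((a:ℤ) + 1)) := by
          rw [← tele v (a:ℤ) b, ← Finset.sum_add_distrib]
          refine Finset.sum_congr rfl fun l _ => ?_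
          push_cast
          ring
        rw [rhs]
      · push_neg at hab
        rw [show min (a+1) b = a+1 by omega]
        rw [show min a b = a by omega] at ih
        rw [Finset.sum_range_succ]
        have expand : ∑ j ∈ Finset.range a, (v ^ ((j:ℤ) + 1 - (b:ℤ)) - v ^ (((a:ℕ)+1:ℕ) - (j:ℤ)))
            = ∑ j ∈ Finset.range a, ((v ^ ((j:ℤ) + 1 - (b:ℤ)) - v ^ ((a:ℤ) - (j:ℤ)))
              + (v ^ ((a:ℤ) - (j:ℤ)) - v ^ ((a:ℤ) + 1 - (j:ℤ)))) := by
          refine Finset.sum_congr rfl fun j _ => ?_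
          push_cast
          ring
        rw [expand, Finset.sum_add_distrib, ih, tele v (a:ℤ) a]
        have rhs : ∑ l ∈ Finset.range b, (v ^ (-(l:ℤ)) - v ^ (((a:ℕ)+1:ℕ) - (l:ℤ)))
            = (∑ l ∈ Finset.range b, (v ^ (-(l:ℤ)) - v ^ ((a:ℤ) - (l:ℤ))))
              + (v ^ ((a:ℤ) + 1 - (b:ℤ)) - v ^ ((a:ℤ) + 1)) := by
          rw [← tele v (a:ℤ) b, ← Finset.sum_add_distrib]
          refine Finset.sum_congr rfl fun l _ => ?_
          push_cast
          ring
        rw [rhs]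
        push_cast
        ring

lemma keyCombined (v : F) (hv : v ≠ 0) (a b : ℕ) :
    ∑ j ∈ Finset.range (min a b), (v ^ ((j:ℤ) + 1 - (b:ℤ)) - v ^ ((a:ℤ) - (j:ℤ)))
      = (1 - v) * (∑ j ∈ Finset.range a, v ^ (j:ℤ)) * (∑ l ∈ Finset.range b, v ^ (-(l:ℤ))) := by
  rw [keyC v hv a b]
  have hG : (1 - v) * (∑ j ∈ Finset.range a, v ^ (j:ℤ)) = 1 - v ^ (a:ℤ) := by
    have := geomA v hv a
    linear_combination -this
  rw [hG, Finset.mul_sum]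
  refine Finset.sum_congr rfl fun l _ => ?_
  rw [show (a:ℤ) - l = (a:ℤ) + (-(l:ℤ)) by ring, zpow_add₀ hv]
  ring

/-- extend a range-sum with an `if` guard -/
lemma sum_range_extend {M r : ℕ} (h : r ≤ M) (g : ℕ → F) :
    ∑ j ∈ Finset.range r, g j = ∑ j ∈ Finset.range M, if j < r then g j else 0 := by
  rw [← Finset.sum_filter]
  congr 1
  ext j
  simp only [Finset.mem_filter, Finset.mem_range]
  omega

lemma sum_range_min {r ρ : ℕ} (g : ℕ → F) :
    ∑ j ∈ Finset.range r, (if j < ρ then g j else 0) = ∑ j ∈ Finset.range (min r ρ), g j := by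
  rw [← Finset.sum_filter]
  congr 1
  ext j
  simp only [Finset.mem_filter, Finset.mem_range]
  omega

lemma sum_cells_rows (Y : YoungDiagram) {M : ℕ} (hM : Y.colLen 0 ≤ M) (f : ℕ × ℕ → F) :
    ∑ s ∈ Y.cells, f s = ∑ i ∈ Finset.range M, ∑ j ∈ Finset.range (Y.rowLen i), f (i, j) := by
  have hsub : Y.cells ⊆ Finset.range M ×ˢ Finset.range (Y.rowLen 0) := by
    rintro ⟨i, j⟩ hij
    rw [Finset.mem_product, Finset.mem_range, Finset.mem_range]
    rw [YoungDiagram.mem_cells] at hij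
    constructor
    · have : (i, 0) ∈ Y := Y.up_left_mem le_rfl (Nat.zero_le j) hij
      rw [YoungDiagram.mem_iff_lt_colLen] at this
      omega
    · have h1 := Y.rowLen_anti 0 i (Nat.zero_le i)
      rw [YoungDiagram.mem_iff_lt_rowLen] at hij
      omega
  calc ∑ s ∈ Y.cells, f s
      = ∑ p ∈ Finset.range M ×ˢ Finset.range (Y.rowLen 0),
          if p ∈ Y.cells then f p else 0 := by
        rw [← Finset.sum_filter, Finset.filter_mem_eq_inter, Finset.inter_eq_right.mpr hsub]
    _ = ∑ i ∈ Finset.range M, ∑ j ∈ Finset.range (Y.rowLen 0),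
          if (i, j) ∈ Y.cells then f (i, j) else 0 := Finset.sum_product _ _ _
    _ = ∑ i ∈ Finset.range M, ∑ j ∈ Finset.range (Y.rowLen i), f (i, j) := by
        refine Finset.sum_congr rfl fun i _ => ?_
        have : ∀ j, ((i, j) ∈ Y.cells) = (j < Y.rowLen i) := fun j => by
          rw [YoungDiagram.mem_cells, YoungDiagram.mem_iff_lt_rowLen]
        simp only [this]
        exact (sum_range_extend (Y.rowLen_anti 0 i (Nat.zero_le i)) _).symm

lemma pair_swap (Y : YoungDiagram) {M : ℕ} (hM : Y.colLen 0 ≤ M) (r : ℕ) (G : ℕ → ℕ → F) :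
    ∑ j ∈ Finset.range r, ∑ k ∈ Finset.range (Y.colLen j), G j k
      = ∑ k ∈ Finset.range M, ∑ j ∈ Finset.range (min r (Y.rowLen k)), G j k := by
  calc ∑ j ∈ Finset.range r, ∑ k ∈ Finset.range (Y.colLen j), G j k
      = ∑ j ∈ Finset.range r, ∑ k ∈ Finset.range M,
          if k < Y.colLen j then G j k else 0 := by
        refine Finset.sum_congr rfl fun j _ => ?_
        exact sum_range_extend (le_trans (Y.colLen_anti 0 j (Nat.zero_le j)) hM) _
    _ = ∑ k ∈ Finset.range M, ∑ j ∈ Finset.range r,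
          if k < Y.colLen j then G j k else 0 := Finset.sum_comm
    _ = ∑ k ∈ Finset.range M, ∑ j ∈ Finset.range (min r (Y.rowLen k)), G j k := by
        refine Finset.sum_congr rfl fun k _ => ?_
        have : ∀ j, (k < Y.colLen j) = (j < Y.rowLen k) := fun j => by
          rw [← YoungDiagram.mem_iff_lt_colLen, YoungDiagram.mem_iff_lt_rowLen]
        simp only [this]
        exact sum_range_min _

set_option maxHeartbeats 2000000 in
theorem Nab_general (u v : K) (hu : u ≠ 0) (hv : v ≠ 0) (Ya Yb : YoungDiagram) :
    Nab Ya Yb u v =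
      (u + v - 1 - u * v) * Vstar Ya u v * V Yb u v
        + V Yb u v + u * v * Vstar Ya u v := by
  set M := max (Ya.colLen 0) (Yb.colLen 0) with hMdef
  have hMa : Ya.colLen 0 ≤ M := le_max_left _ _
  have hMb : Yb.colLen 0 ≤ M := le_max_right _ _
  -- row-sum forms of Vstar and V
  have hVs : Vstar Ya u v
      = ∑ i ∈ Finset.range M, u ^ (i:ℤ) * ∑ j ∈ Finset.range (Ya.rowLen i), v ^ (j:ℤ) := by
    rw [Vstar, sum_cells_rows Ya hMa]
    exact Finset.sum_congr rfl fun i _ => by rw [Finset.mul_sum]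
  have hV : V Yb u v
      = ∑ k ∈ Finset.range M, u ^ (-(k:ℤ)) * ∑ l ∈ Finset.range (Yb.rowLen k), v ^ (-(l:ℤ)) := by
    rw [V, sum_cells_rows Yb hMb]
    exact Finset.sum_congr rfl fun k _ => by rw [Finset.mul_sum]
  -- the first sum of N
  have hS1 : (∑ s ∈ Ya.cells, u ^ (-(legLen Yb s)) * v ^ (armLen Ya s + 1))
      = u * v * Vstar Ya u v
        - ∑ i ∈ Finset.range M, ∑ k ∈ Finset.range M,
            (u - 1) * u ^ (i:ℤ) * u ^ (-(k:ℤ))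
              * ∑ j ∈ Finset.range (min (Ya.rowLen i) (Yb.rowLen k)),
                  v ^ ((Ya.rowLen i : ℤ) - j) := by
    rw [sum_cells_rows Ya hMa, hVs, Finset.mul_sum, ← Finset.sum_sub_distrib]
    refine Finset.sum_congr rfl fun i _ => ?_
    calc ∑ j ∈ Finset.range (Ya.rowLen i), u ^ (-(legLen Yb (i, j))) * v ^ (armLen Ya (i, j) + 1)
        = ∑ j ∈ Finset.range (Ya.rowLen i),
            (u * (u ^ (i:ℤ) * v ^ ((Ya.rowLen i : ℤ) - j))
              - ∑ k ∈ Finset.range (Yb.colLen j),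
                  (u - 1) * u ^ (i:ℤ) * u ^ (-(k:ℤ)) * v ^ ((Ya.rowLen i : ℤ) - j)) := by
          refine Finset.sum_congr rfl fun j _ => ?_
          simp only [legLen, armLen]
          rw [show -((Yb.colLen j : ℤ) - i - 1) = (i:ℤ) + (1 - (Yb.colLen j : ℤ)) by ring,
            show (Ya.rowLen i : ℤ) - j - 1 + 1 = (Ya.rowLen i : ℤ) - j by ring,
            zpow_add₀ hu]
          have hsum : ∑ k ∈ Finset.range (Yb.colLen j),
              (u - 1) * u ^ (i:ℤ) * u ^ (-(k:ℤ)) * v ^ ((Ya.rowLen i : ℤ) - j)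
              = (u - 1) * u ^ (i:ℤ) * v ^ ((Ya.rowLen i : ℤ) - j)
                * ∑ k ∈ Finset.range (Yb.colLen j), u ^ (-(k:ℤ)) := by
            rw [Finset.mul_sum]
            exact Finset.sum_congr rfl fun k _ => by ring
          rw [hsum]
          linear_combination u ^ (i:ℤ) * v ^ ((Ya.rowLen i : ℤ) - (j:ℤ)) * geomH u hu (Yb.colLen j)
      _ = (∑ j ∈ Finset.range (Ya.rowLen i), u * (u ^ (i:ℤ) * v ^ ((Ya.rowLen i : ℤ) - j)))
            - ∑ j ∈ Finset.range (Ya.rowLen i), ∑ k ∈ Finset.range (Yb.colLen j),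
                (u - 1) * u ^ (i:ℤ) * u ^ (-(k:ℤ)) * v ^ ((Ya.rowLen i : ℤ) - j) :=
          Finset.sum_sub_distrib _ _
      _ = u * v * (u ^ (i:ℤ) * ∑ j ∈ Finset.range (Ya.rowLen i), v ^ (j:ℤ))
            - ∑ k ∈ Finset.range M,
                (u - 1) * u ^ (i:ℤ) * u ^ (-(k:ℤ))
                  * ∑ j ∈ Finset.range (min (Ya.rowLen i) (Yb.rowLen k)),
                      v ^ ((Ya.rowLen i : ℤ) - j) := by
          congr 1
          · calc ∑ j ∈ Finset.range (Ya.rowLen i), u * (u ^ (i:ℤ) * v ^ ((Ya.rowLen i : ℤ) - j))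
                = (u * u ^ (i:ℤ)) * ∑ j ∈ Finset.range (Ya.rowLen i), v ^ ((Ya.rowLen i : ℤ) - (j:ℤ)) := by
                  rw [Finset.mul_sum]
                  exact Finset.sum_congr rfl fun j _ => by ring
              _ = (u * u ^ (i:ℤ)) * (v * ∑ j ∈ Finset.range (Ya.rowLen i), v ^ (j:ℤ)) := by
                  rw [reflect1 v hv (Ya.rowLen i)]
              _ = u * v * (u ^ (i:ℤ) * ∑ j ∈ Finset.range (Ya.rowLen i), v ^ (j:ℤ)) := by ring
          · rw [pair_swap Yb hMb (Ya.rowLen i)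
              (fun j k => (u - 1) * u ^ (i:ℤ) * u ^ (-(k:ℤ)) * v ^ ((Ya.rowLen i : ℤ) - j))]
            exact Finset.sum_congr rfl fun k _ => by rw [Finset.mul_sum]
  -- the second sum of N
  have hS2 : (∑ t ∈ Yb.cells, u ^ (legLen Ya t + 1) * v ^ (-(armLen Yb t)))
      = V Yb u v
        + ∑ k ∈ Finset.range M, ∑ i ∈ Finset.range M,
            (u - 1) * u ^ (i:ℤ) * u ^ (-(k:ℤ))
              * ∑ l ∈ Finset.range (min (Yb.rowLen k) (Ya.rowLen i)),
                  v ^ ((l:ℤ) + 1 - (Yb.rowLen k : ℤ)) := by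
    rw [sum_cells_rows Yb hMb, hV, ← Finset.sum_add_distrib]
    refine Finset.sum_congr rfl fun k _ => ?_
    calc ∑ l ∈ Finset.range (Yb.rowLen k), u ^ (legLen Ya (k, l) + 1) * v ^ (-(armLen Yb (k, l)))
        = ∑ l ∈ Finset.range (Yb.rowLen k),
            (u ^ (-(k:ℤ)) * v ^ ((l:ℤ) + 1 - (Yb.rowLen k : ℤ))
              + ∑ m ∈ Finset.range (Ya.colLen l),
                  (u - 1) * u ^ (m:ℤ) * u ^ (-(k:ℤ)) * v ^ ((l:ℤ) + 1 - (Yb.rowLen k : ℤ))) := by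
          refine Finset.sum_congr rfl fun l _ => ?_
          simp only [legLen, armLen]
          rw [show (Ya.colLen l : ℤ) - k - 1 + 1 = (-(k:ℤ)) + (Ya.colLen l : ℤ) by ring,
            show -((Yb.rowLen k : ℤ) - l - 1) = (l:ℤ) + 1 - (Yb.rowLen k : ℤ) by ring,
            zpow_add₀ hu]
          have hsum : ∑ m ∈ Finset.range (Ya.colLen l),
              (u - 1) * u ^ (m:ℤ) * u ^ (-(k:ℤ)) * v ^ ((l:ℤ) + 1 - (Yb.rowLen k : ℤ))
              = (u - 1) * u ^ (-(k:ℤ)) * v ^ ((l:ℤ) + 1 - (Yb.rowLen k : ℤ))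
                * ∑ m ∈ Finset.range (Ya.colLen l), u ^ (m:ℤ) := by
            rw [Finset.mul_sum]
            exact Finset.sum_congr rfl fun m _ => by ring
          rw [hsum]
          linear_combination (-(u ^ (-(k:ℤ)) * v ^ ((l:ℤ) + 1 - (Yb.rowLen k : ℤ)))) * geomA u hu (Ya.colLen l)
      _ = (∑ l ∈ Finset.range (Yb.rowLen k), u ^ (-(k:ℤ)) * v ^ ((l:ℤ) + 1 - (Yb.rowLen k : ℤ)))
            + ∑ l ∈ Finset.range (Yb.rowLen k), ∑ m ∈ Finset.range (Ya.colLen l),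
                (u - 1) * u ^ (m:ℤ) * u ^ (-(k:ℤ)) * v ^ ((l:ℤ) + 1 - (Yb.rowLen k : ℤ)) :=
          Finset.sum_add_distrib
      _ = u ^ (-(k:ℤ)) * (∑ l ∈ Finset.range (Yb.rowLen k), v ^ (-(l:ℤ)))
            + ∑ i ∈ Finset.range M,
                (u - 1) * u ^ (i:ℤ) * u ^ (-(k:ℤ))
                  * ∑ l ∈ Finset.range (min (Yb.rowLen k) (Ya.rowLen i)),
                      v ^ ((l:ℤ) + 1 - (Yb.rowLen k : ℤ)) := by
          congr 1
          · rw [← reflect2 v (Yb.rowLen k), Finset.mul_sum]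
          · rw [pair_swap Ya hMa (Yb.rowLen k)
              (fun l m => (u - 1) * u ^ (m:ℤ) * u ^ (-(k:ℤ)) * v ^ ((l:ℤ) + 1 - (Yb.rowLen k : ℤ)))]
            exact Finset.sum_congr rfl fun m _ => by rw [Finset.mul_sum]
  -- combine
  rw [Nab, hS1, hS2]
  have hswap : ∑ k ∈ Finset.range M, ∑ i ∈ Finset.range M,
      (u - 1) * u ^ (i:ℤ) * u ^ (-(k:ℤ))
        * ∑ l ∈ Finset.range (min (Yb.rowLen k) (Ya.rowLen i)),
            v ^ ((l:ℤ) + 1 - (Yb.rowLen k : ℤ))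
      = ∑ i ∈ Finset.range M, ∑ k ∈ Finset.range M,
          (u - 1) * u ^ (i:ℤ) * u ^ (-(k:ℤ))
            * ∑ l ∈ Finset.range (min (Yb.rowLen k) (Ya.rowLen i)),
                v ^ ((l:ℤ) + 1 - (Yb.rowLen k : ℤ)) := Finset.sum_comm
  rw [hswap]
  have hdiff : ∑ i ∈ Finset.range M, ∑ k ∈ Finset.range M,
        (u - 1) * u ^ (i:ℤ) * u ^ (-(k:ℤ))
          * ∑ l ∈ Finset.range (min (Yb.rowLen k) (Ya.rowLen i)),
              v ^ ((l:ℤ) + 1 - (Yb.rowLen k : ℤ))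
      - ∑ i ∈ Finset.range M, ∑ k ∈ Finset.range M,
          (u - 1) * u ^ (i:ℤ) * u ^ (-(k:ℤ))
            * ∑ j ∈ Finset.range (min (Ya.rowLen i) (Yb.rowLen k)),
                v ^ ((Ya.rowLen i : ℤ) - j)
      = (u - 1) * (1 - v) * Vstar Ya u v * V Yb u v := by
    rw [← Finset.sum_sub_distrib]
    have hstep : ∀ i ∈ Finset.range M,
        (∑ k ∈ Finset.range M,
          (u - 1) * u ^ (i:ℤ) * u ^ (-(k:ℤ))
            * ∑ l ∈ Finset.range (min (Yb.rowLen k) (Ya.rowLen i)),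
                v ^ ((l:ℤ) + 1 - (Yb.rowLen k : ℤ)))
        - ∑ k ∈ Finset.range M,
            (u - 1) * u ^ (i:ℤ) * u ^ (-(k:ℤ))
              * ∑ j ∈ Finset.range (min (Ya.rowLen i) (Yb.rowLen k)),
                  v ^ ((Ya.rowLen i : ℤ) - j)
        = ∑ k ∈ Finset.range M,
            (u - 1) * (1 - v) * (u ^ (i:ℤ) * ∑ j ∈ Finset.range (Ya.rowLen i), v ^ (j:ℤ))
              * (u ^ (-(k:ℤ)) * ∑ l ∈ Finset.range (Yb.rowLen k), v ^ (-(l:ℤ))) := by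
      intro i _
      rw [← Finset.sum_sub_distrib]
      refine Finset.sum_congr rfl fun k _ => ?_
      have hmin : min (Yb.rowLen k) (Ya.rowLen i) = min (Ya.rowLen i) (Yb.rowLen k) :=
        min_comm _ _
      rw [hmin]
      have hk := keyCombined v hv (Ya.rowLen i) (Yb.rowLen k)
      rw [Finset.sum_sub_distrib] at hk
      calc (u - 1) * u ^ (i:ℤ) * u ^ (-(k:ℤ))
              * ∑ l ∈ Finset.range (min (Ya.rowLen i) (Yb.rowLen k)),
                  v ^ ((l:ℤ) + 1 - (Yb.rowLen k : ℤ))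
            - (u - 1) * u ^ (i:ℤ) * u ^ (-(k:ℤ))
              * ∑ j ∈ Finset.range (min (Ya.rowLen i) (Yb.rowLen k)),
                  v ^ ((Ya.rowLen i : ℤ) - j)
          = (u - 1) * u ^ (i:ℤ) * u ^ (-(k:ℤ))
              * ((∑ l ∈ Finset.range (min (Ya.rowLen i) (Yb.rowLen k)),
                    v ^ ((l:ℤ) + 1 - (Yb.rowLen k : ℤ)))
                - ∑ j ∈ Finset.range (min (Ya.rowLen i) (Yb.rowLen k)),
                    v ^ ((Ya.rowLen i : ℤ) - j)) := by ring
        _ = (u - 1) * u ^ (i:ℤ) * u ^ (-(k:ℤ))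
              * ((1 - v) * (∑ j ∈ Finset.range (Ya.rowLen i), v ^ (j:ℤ))
                * (∑ l ∈ Finset.range (Yb.rowLen k), v ^ (-(l:ℤ)))) := by rw [hk]
        _ = (u - 1) * (1 - v) * (u ^ (i:ℤ) * ∑ j ∈ Finset.range (Ya.rowLen i), v ^ (j:ℤ))
              * (u ^ (-(k:ℤ)) * ∑ l ∈ Finset.range (Yb.rowLen k), v ^ (-(l:ℤ))) := by ring
    calc ∑ i ∈ Finset.range M, ((∑ k ∈ Finset.range M,
          (u - 1) * u ^ (i:ℤ) * u ^ (-(k:ℤ))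
            * ∑ l ∈ Finset.range (min (Yb.rowLen k) (Ya.rowLen i)),
                v ^ ((l:ℤ) + 1 - (Yb.rowLen k : ℤ)))
        - ∑ k ∈ Finset.range M,
            (u - 1) * u ^ (i:ℤ) * u ^ (-(k:ℤ))
              * ∑ j ∈ Finset.range (min (Ya.rowLen i) (Yb.rowLen k)),
                  v ^ ((Ya.rowLen i : ℤ) - j))
        = ∑ i ∈ Finset.range M, ∑ k ∈ Finset.range M,
            (u - 1) * (1 - v) * (u ^ (i:ℤ) * ∑ j ∈ Finset.range (Ya.rowLen i), v ^ (j:ℤ))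
              * (u ^ (-(k:ℤ)) * ∑ l ∈ Finset.range (Yb.rowLen k), v ^ (-(l:ℤ))) :=
          Finset.sum_congr rfl hstep
      _ = (u - 1) * (1 - v) * Vstar Ya u v * V Yb u v := by
          have hms := Finset.sum_mul_sum (Finset.range M) (Finset.range M)
            (fun i => u ^ (i:ℤ) * ∑ j ∈ Finset.range (Ya.rowLen i), v ^ (j:ℤ))
            (fun k => u ^ (-(k:ℤ)) * ∑ l ∈ Finset.range (Yb.rowLen k), v ^ (-(l:ℤ)))
          calc ∑ i ∈ Finset.range M, ∑ k ∈ Finset.range M,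
                (u - 1) * (1 - v) * (u ^ (i:ℤ) * ∑ j ∈ Finset.range (Ya.rowLen i), v ^ (j:ℤ))
                  * (u ^ (-(k:ℤ)) * ∑ l ∈ Finset.range (Yb.rowLen k), v ^ (-(l:ℤ)))
              = (u - 1) * (1 - v) * ∑ i ∈ Finset.range M, ∑ k ∈ Finset.range M,
                  (u ^ (i:ℤ) * ∑ j ∈ Finset.range (Ya.rowLen i), v ^ (j:ℤ))
                    * (u ^ (-(k:ℤ)) * ∑ l ∈ Finset.range (Yb.rowLen k), v ^ (-(l:ℤ))) := by
                rw [Finset.mul_sum (Finset.range M)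
                  (fun i => ∑ k ∈ Finset.range M,
                    (u ^ (i:ℤ) * ∑ j ∈ Finset.range (Ya.rowLen i), v ^ (j:ℤ))
                      * (u ^ (-(k:ℤ)) * ∑ l ∈ Finset.range (Yb.rowLen k), v ^ (-(l:ℤ))))
                  ((u - 1) * (1 - v))]
                refine Finset.sum_congr rfl fun i _ => ?_
                rw [Finset.mul_sum (Finset.range M)
                  (fun k => (u ^ (i:ℤ) * ∑ j ∈ Finset.range (Ya.rowLen i), v ^ (j:ℤ))
                      * (u ^ (-(k:ℤ)) * ∑ l ∈ Finset.range (Yb.rowLen k), v ^ (-(l:ℤ))))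
                  ((u - 1) * (1 - v))]
                refine Finset.sum_congr rfl fun k _ => ?_
                ring
            _ = (u - 1) * (1 - v)
                  * ((∑ i ∈ Finset.range M, u ^ (i:ℤ) * ∑ j ∈ Finset.range (Ya.rowLen i), v ^ (j:ℤ))
                    * ∑ k ∈ Finset.range M, u ^ (-(k:ℤ)) * ∑ l ∈ Finset.range (Yb.rowLen k), v ^ (-(l:ℤ))) := by
                rw [hms]
            _ = (u - 1) * (1 - v) * Vstar Ya u v * V Yb u v := by
                rw [hVs, hV]; ring
  linear_combination hdiff

/-- `N_{α,β}(t₁,t₂) = (t₁ + t₂ − 1 − t₁t₂)·V_α^*·V_β + V_β + t₁t₂·V_α^*`. -/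
theorem Nab_eq_character (Ya Yb : YoungDiagram) :
    Nab Ya Yb t1 t2 =
      (t1 + t2 - 1 - t1 * t2) * Vstar Ya t1 t2 * V Yb t1 t2
        + V Yb t1 t2 + t1 * t2 * Vstar Ya t1 t2 := by
  have hinj : Function.Injective (algebraMap (MvPolynomial (Fin 2) ℚ) K) :=
    IsFractionRing.injective _ _
  have h1 : t1 ≠ 0 := by
    intro h
    exact MvPolynomial.X_ne_zero 0 (hinj (by rw [map_zero]; exact h))
  have h2 : t2 ≠ 0 := by
    intro h
    exact MvPolynomial.X_ne_zero 1 (hinj (by rw [map_zero]; exact h))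
  exact Nab_general t1 t2 h1 h2 Ya Yb
end
end

section
/- Define Z_n(ε_1,ε_2,a⃗) = ∑_{|Y⃗|=n} 1/∏_{α,β} n^{Y⃗}_{α,β}(ε_1,ε_2,a⃗) as the n-th coefficient of Nekrasov's partition function for rank r, and let l^{k⃗}_α be as above. Assume the blowup relation (d=1): for all n ≥ 1, n·ε_1·Z_n(ε_1,ε_2−ε_1,a⃗) + n·ε_2·Z_n(ε_1−ε_2,ε_2,a⃗) = −∑ over (k⃗,l,m) with k⃗ ∈ Q \ {0} or (l,m) with l,m < n, (1/2)(k⃗,k⃗)+l+m = n, of (lε_1 + mε_2 + (k⃗,a⃗) + (1/2)(k⃗,k⃗)(ε_1+ε_2)) · Z_l(ε_1,ε_2−ε_1,a⃗+ε_1k⃗) Z_m(ε_1−ε_2,ε_2,a⃗+ε_2k⃗) / ∏_{α∈Δ} l^{k⃗}_α(ε_1,ε_2,a⃗). Then Z_n(ε_1, −2ε_1, a⃗) = Z_n(2ε_1, −ε_1, a⃗) for all n ≥ 0. -/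
noncomputable section

/-- `n^{Y⃗}_{α,β}(ε₁,ε₂,a⃗) = ∏_{s∈Y_α}(−l_{Y_β}(s)ε₁ + (a_{Y_α}(s)+1)ε₂ + a_β − a_α)
  · ∏_{t∈Y_β}((l_{Y_α}(t)+1)ε₁ − a_{Y_β}(t)ε₂ + a_β − a_α)`. -/
def nYab {K : Type*} [CommRing K] {r : ℕ} (Y : Fin r → YoungDiagram) (α β : Fin r)
    (e1 e2 : K) (a : Fin r → K) : K :=
  (∏ s ∈ (Y α).cells,
      ((-(legLen (Y β) s : K)) * e1 + ((armLen (Y α) s : K) + 1) * e2 + a β - a α)) *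
    ∏ t ∈ (Y β).cells,
      (((legLen (Y α) t : K) + 1) * e1 - (armLen (Y β) t : K) * e2 + a β - a α)

/-- The `n`-th coefficient `Z_n(ε₁,ε₂,a⃗)` of Nekrasov's partition function:
the sum over `r`-tuples of Young diagrams of total size `n` of
`1/∏_{α,β} n^{Y⃗}_{α,β}(ε₁,ε₂,a⃗)`. -/
def Zcoeff (K : Type*) [Field K] (r n : ℕ) (e1 e2 : K) (a : Fin r → K) : K :=
  ∑ᶠ Y ∈ {Y : Fin r → YoungDiagram | (∑ α, (Y α).card) = n},
    (∏ α, ∏ β, nYab Y α β e1 e2 a)⁻¹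

/-- The triangle `{(i,j) ∈ ℕ² : i + j ≤ N}`. -/
def tri (N : ℕ) : Finset (ℕ × ℕ) :=
  (Finset.range (N + 1) ×ˢ Finset.range (N + 1)).filter fun p => p.1 + p.2 ≤ N

/-- `L_m(ε₁,ε₂,x)`: the blowup factor `l^{k⃗}_α` as a function of `m = ⟨k⃗,α⟩`,
`x = ⟨a⃗,α⟩`. -/
def Lm {R : Type*} [CommRing R] (m : ℤ) (e1 e2 x : R) : R :=
  if m < 0 then ∏ p ∈ tri (-m - 1).toNat, (-(p.1 : R) * e1 - (p.2 : R) * e2 + x)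
  else if 1 < m then ∏ p ∈ tri (m - 2).toNat, (((p.1 : R) + 1) * e1 + ((p.2 : R) + 1) * e2 + x)
  else 1

/-!
Put `ε₂ = -ε₁` in the blowup relation and induct on `n`. In the resulting sum the terms of
`(k⃗, l, m)` and `(-k⃗, m, l)` cancel: the two `Z`-factors are exchanged by the induction
hypothesis, the linear prefactor changes sign, and the product of the `l^{k⃗}_α` is unchanged,
since `l^{k⃗}_α(ε₁,-ε₁,a⃗) = (-1)^{⟨k⃗,α⟩(⟨k⃗,α⟩-1)/2} l^{-k⃗}_{-α}(ε₁,-ε₁,a⃗)` and the total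
exponent `r (k⃗,k⃗)` is even. What remains is `n ε₁ (Z_n(ε₁,-2ε₁,a⃗) - Z_n(2ε₁,-ε₁,a⃗)) = 0`.
-/

open Finset

lemma mem_tri {N : ℕ} {p : ℕ × ℕ} : p ∈ tri N ↔ p.1 + p.2 ≤ N := by
  simp only [tri, mem_filter, mem_product, mem_range]
  omega

lemma two_mul_card_tri (N : ℕ) : 2 * #(tri N) = (N + 1) * (N + 2) := by
  induction N with
  | zero => decide
  | succ N ih =>
    have hunion : tri (N + 1) = tri N ∪ antidiagonal (N + 1) := by
      ext p
      rw [mem_union, mem_tri, mem_tri, HasAntidiagonal.mem_antidiagonal]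
      omega
    have hdisj : Disjoint (tri N) (antidiagonal (N + 1)) := by
      rw [disjoint_left]
      intro p hp hp'
      rw [mem_tri] at hp
      rw [HasAntidiagonal.mem_antidiagonal] at hp'
      omega
    rw [hunion, card_union_of_disjoint hdisj, Nat.card_antidiagonal, mul_add, ih]
    ring

lemma prod_tri_swap {M : Type*} [CommMonoid M] (N : ℕ) (f : ℕ × ℕ → M) :
    ∏ p ∈ tri N, f p = ∏ p ∈ tri N, f p.swap :=
  prod_equiv (Equiv.prodComm ℕ ℕ) (fun p => by simp [mem_tri, add_comm]) (fun _ _ => rfl)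

def lmFactorCount (m : ℤ) : ℕ :=
  if m < 0 then #(tri (-m - 1).toNat) else if 1 < m then #(tri (m - 2).toNat) else 0

lemma two_mul_lmFactorCount (m : ℤ) : 2 * (lmFactorCount m : ℤ) = m * (m - 1) := by
  unfold lmFactorCount
  split_ifs with hneg hpos
  · have hcard : (2 * #(tri (-m - 1).toNat) : ℤ) = ((-m - 1).toNat + 1) * ((-m - 1).toNat + 2) := by
      exact_mod_cast two_mul_card_tri _
    rw [Int.toNat_of_nonneg (by omega)] at hcard
    linarith
  · have hcard : (2 * #(tri (m - 2).toNat) : ℤ) = ((m - 2).toNat + 1) * ((m - 2).toNat + 2) := by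
      exact_mod_cast two_mul_card_tri _
    rw [Int.toNat_of_nonneg (by omega)] at hcard
    linarith
  · obtain rfl | rfl : m = 0 ∨ m = 1 := by omega
    all_goals norm_num

lemma Lm_zero {R : Type*} [CommRing R] (e1 e2 x : R) : Lm 0 e1 e2 x = 1 := by
  simp [Lm]

/-- On the line `ε₂ = -ε₁`, the factor indexed by `(i, j)` at `-x` is minus the factor indexed
by `(j, i)` at `x`. -/
lemma Lm_neg_neg {R : Type*} [CommRing R] (m : ℤ) (e x : R) :
    Lm m e (-e) (-x) = (-1) ^ lmFactorCount m * Lm m e (-e) x := by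
  unfold Lm lmFactorCount
  split_ifs
  · rw [← prod_neg, prod_tri_swap]
    refine prod_congr rfl fun p _ => ?_
    simp only [Prod.fst_swap, Prod.snd_swap]
    ring
  · rw [← prod_neg, prod_tri_swap]
    refine prod_congr rfl fun p _ => ?_
    simp only [Prod.fst_swap, Prod.snd_swap]
    ring
  · simp

lemma sum_sum_sub_mul_sub_sub_one {ι R : Type*} [Fintype ι] [CommRing R] (k : ι → R) :
    ∑ α, ∑ β, (k β - k α) * (k β - k α - 1)
      = 2 * Fintype.card ι * ∑ α, k α ^ 2 - 2 * (∑ α, k α) ^ 2 := by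
  have hexpand : ∀ α β, (k β - k α) * (k β - k α - 1)
      = k β ^ 2 + k α ^ 2 - 2 * (k α * k β) - k β + k α := fun _ _ => by ring
  simp only [hexpand, sum_add_distrib, sum_sub_distrib, sum_const, card_univ, nsmul_eq_mul,
    ← mul_sum, ← sum_mul]
  ring

lemma even_sum_sq_of_sum_eq_zero {ι : Type*} [Fintype ι] {k : ι → ℤ} (hk : ∑ α, k α = 0) :
    Even (∑ α, k α ^ 2) := by
  have hsplit : ∑ α, k α ^ 2 = ∑ α, k α * (k α - 1) + ∑ α, k α := by
    rw [← sum_add_distrib]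
    exact sum_congr rfl fun _ _ => by ring
  rw [hsplit, hk, add_zero]
  exact even_sum _ fun α _ => Int.even_mul_pred_self (k α)

/-- The sum equals `r (k⃗,k⃗)`, and `(k⃗,k⃗)` is even on the coroot lattice. -/
lemma even_sum_lmFactorCount {r : ℕ} {k : Fin r → ℤ} (hk : ∑ α, k α = 0) :
    Even (∑ p : Fin r × Fin r, lmFactorCount (k p.2 - k p.1)) := by
  have hcount : ((∑ p : Fin r × Fin r, lmFactorCount (k p.2 - k p.1) : ℕ) : ℤ)
      = r * ∑ α, k α ^ 2 := by
    have h2 := sum_sum_sub_mul_sub_sub_one k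
    rw [hk, ← Fintype.sum_prod_type'] at h2
    simp only [← two_mul_lmFactorCount, ← mul_sum, Fintype.card_fin] at h2
    push_cast
    linarith
  have heven : Even ((∑ p : Fin r × Fin r, lmFactorCount (k p.2 - k p.1) : ℕ) : ℤ) := by
    rw [hcount]
    exact (even_sum_sq_of_sum_eq_zero hk).mul_left _
  exact_mod_cast heven

lemma prod_Lm_neg_eq_prod_Lm {R : Type*} [CommRing R] {r : ℕ} {k : Fin r → ℤ}
    (hk : ∑ α, k α = 0) (e : R) (a : Fin r → R) :
    ∏ p ∈ univ.filter (fun p : Fin r × Fin r => p.1 ≠ p.2),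
        Lm (-k p.2 - -k p.1) e (-e) (a p.2 - a p.1)
      = ∏ p ∈ univ.filter (fun p : Fin r × Fin r => p.1 ≠ p.2),
        Lm (k p.2 - k p.1) e (-e) (a p.2 - a p.1) := by
  have hdiag : ∀ (m : Fin r → ℤ) (x : Fin r × Fin r → R),
      ∏ p ∈ univ.filter (fun p : Fin r × Fin r => p.1 ≠ p.2), Lm (m p.2 - m p.1) e (-e) (x p)
        = ∏ p, Lm (m p.2 - m p.1) e (-e) (x p) := by
    refine fun m x => prod_filter_of_ne fun p _ hp heq => hp ?_
    rw [heq, sub_self, Lm_zero]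
  have hswap : ∏ p : Fin r × Fin r, Lm (-k p.2 - -k p.1) e (-e) (a p.2 - a p.1)
      = ∏ p : Fin r × Fin r, Lm (k p.2 - k p.1) e (-e) (-(a p.2 - a p.1)) :=
    Fintype.prod_equiv (Equiv.prodComm _ _) _ _ fun p => by
      simp only [Equiv.prodComm_apply, Prod.fst_swap, Prod.snd_swap, neg_sub, neg_sub_neg]
  rw [hdiag k]
  refine (hdiag (fun α => -k α) _).trans ?_
  rw [hswap]
  simp only [Lm_neg_neg, prod_mul_distrib, prod_pow_eq_pow_sum,
    (even_sum_lmFactorCount hk).neg_one_pow, one_mul]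

lemma Zcoeff_zero {K : Type*} [Field K] (r : ℕ) (e1 e2 : K) (a : Fin r → K) :
    Zcoeff K r 0 e1 e2 a = 1 := by
  have hset : {Y : Fin r → YoungDiagram | ∑ α, (Y α).card = 0} = {fun _ => ⊥} := by
    ext Y
    simp only [Set.mem_ofPred_eq, Set.mem_singleton_iff, sum_eq_zero_iff, mem_univ, true_implies]
    refine ⟨fun hY => funext fun α => ?_, fun hY α => by simp [hY]⟩
    ext c
    simp [card_eq_zero.mp (hY α)]
  rw [Zcoeff, hset, finsum_mem_singleton]
  simp [nYab]

lemma finsum_mem_eq_zero_of_bijOn_neg {γ R : Type*} [Ring R] [NoZeroDivisors R] [CharZero R]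
    {S : Set γ} {f : γ → R} (σ : γ → γ) (hσ : Set.BijOn σ S S) (hf : ∀ t ∈ S, f (σ t) = -f t) :
    ∑ᶠ t ∈ S, f t = 0 := by
  have hsum : ∑ᶠ t ∈ S, -f t = ∑ᶠ t ∈ S, f t :=
    finsum_mem_eq_of_bijOn σ hσ fun t ht => (hf t ht).symm
  simp only [finsum_neg_distrib] at hsum
  exact CharZero.neg_eq_self_iff.mp hsum

/-- The index set `{(k⃗, l, m) : k⃗ ∈ Q, (k⃗,k⃗)/2 + l + m = n} \ {(0, n, 0), (0, 0, n)}` of the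
blowup relation. -/
def blowupIndex (r n : ℕ) : Set ((Fin r → ℤ) × ℕ × ℕ) :=
  {t | ∑ α, t.1 α = 0 ∧ ∑ α, t.1 α ^ 2 + 2 * t.2.1 + 2 * t.2.2 = 2 * n ∧
    ¬ (t.1 = 0 ∧ (t.2.1 = n ∨ t.2.2 = n))}

def blowupTerm {K : Type*} [Field K] {r : ℕ} (e1 e2 : K) (a : Fin r → K)
    (t : (Fin r → ℤ) × ℕ × ℕ) : K :=
  ((t.2.1 : K) * e1 + (t.2.2 : K) * e2 + ∑ α, (t.1 α : K) * a α
      + ((∑ α, (t.1 α : K) ^ 2) / 2) * (e1 + e2))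
    * Zcoeff K r t.2.1 e1 (e2 - e1) (fun α => a α + e1 * (t.1 α : K))
    * Zcoeff K r t.2.2 (e1 - e2) e2 (fun α => a α + e2 * (t.1 α : K))
    * (∏ p ∈ univ.filter (fun p : Fin r × Fin r => p.1 ≠ p.2),
        Lm (t.1 p.2 - t.1 p.1) e1 e2 (a p.2 - a p.1))⁻¹

lemma blowupIndex_bijOn_neg_swap (r n : ℕ) :
    Set.BijOn (fun t : (Fin r → ℤ) × ℕ × ℕ => (-t.1, t.2.2, t.2.1))
      (blowupIndex r n) (blowupIndex r n) := by
  have hmaps : Set.MapsTo (fun t : (Fin r → ℤ) × ℕ × ℕ => (-t.1, t.2.2, t.2.1))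
      (blowupIndex r n) (blowupIndex r n) := by
    rintro ⟨k, l, m⟩ ⟨hk, hsum, hne⟩
    refine ⟨?_, ?_, ?_⟩
    · simp only [Pi.neg_apply, sum_neg_distrib, hk, neg_zero]
    · simp only [Pi.neg_apply, neg_sq]
      linarith
    · rintro ⟨hk0, hlm⟩
      exact hne ⟨neg_eq_zero.mp hk0, hlm.symm⟩
  exact Set.InvOn.bijOn ⟨fun t _ => by simp, fun t _ => by simp⟩ hmaps hmaps

lemma lt_of_mem_blowupIndex {r n : ℕ} {t : (Fin r → ℤ) × ℕ × ℕ} (ht : t ∈ blowupIndex r n) :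
    t.2.1 < n ∧ t.2.2 < n := by
  obtain ⟨k, l, m⟩ := t
  obtain ⟨hk, hsum, hne⟩ := ht
  dsimp only at hsum hne ⊢
  by_cases hk0 : k = 0
  · simp [hk0] at hsum hne
    omega
  · obtain ⟨α, hα⟩ := Function.ne_iff.mp hk0
    have hpos : 0 < ∑ β, k β ^ 2 :=
      (sq_pos_of_ne_zero hα).trans_le
        (single_le_sum (fun β _ => sq_nonneg (k β)) (mem_univ α))
    obtain ⟨c, hc⟩ := even_sum_sq_of_sum_eq_zero hk
    constructor <;> omega

section SpecialLine

variable {K : Type*} [Field K] [CharZero K] {r n : ℕ} {e : K}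

lemma blowupTerm_neg_swap
    (hZ : ∀ j < n, ∀ c : Fin r → K, Zcoeff K r j e (-e - e) c = Zcoeff K r j (e - -e) (-e) c)
    (a : Fin r → K) {t : (Fin r → ℤ) × ℕ × ℕ} (ht : t ∈ blowupIndex r n) :
    blowupTerm e (-e) a (-t.1, t.2.2, t.2.1) = -blowupTerm e (-e) a t := by
  obtain ⟨k, l, m⟩ := t
  obtain ⟨hl, hm⟩ := lt_of_mem_blowupIndex ht
  have hZm : Zcoeff K r m e (-e - e) (fun α => a α + e * ((-k α : ℤ) : K))
      = Zcoeff K r m (e - -e) (-e) (fun α => a α + -e * (k α : K)) := by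
    rw [hZ m hm]
    congr 1
    funext α
    push_cast
    ring
  have hZl : Zcoeff K r l (e - -e) (-e) (fun α => a α + -e * ((-k α : ℤ) : K))
      = Zcoeff K r l e (-e - e) (fun α => a α + e * (k α : K)) := by
    rw [← hZ l hl]
    congr 1
    funext α
    push_cast
    ring
  have hsum : ∑ α, ((-k α : ℤ) : K) * a α = -∑ α, (k α : K) * a α := by
    rw [← sum_neg_distrib]
    exact sum_congr rfl fun α _ => by push_cast; ring
  simp only [blowupTerm, Pi.neg_apply, hZm, hZl, hsum, prod_Lm_neg_eq_prod_Lm ht.1]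
  ring

lemma finsum_blowupTerm_eq_zero
    (hZ : ∀ j < n, ∀ c : Fin r → K, Zcoeff K r j e (-e - e) c = Zcoeff K r j (e - -e) (-e) c)
    (a : Fin r → K) :
    ∑ᶠ t ∈ blowupIndex r n, blowupTerm e (-e) a t = 0 :=
  finsum_mem_eq_zero_of_bijOn_neg _ (blowupIndex_bijOn_neg_swap r n)
    fun _ ht => blowupTerm_neg_swap hZ a ht

end SpecialLine

/-- assuming the `d = 1` blowup relation for all `n ≥ 1` (as an identity in
the parameters), one has `Z_n(ε₁, −2ε₁, a⃗) = Z_n(2ε₁, −ε₁, a⃗)` for all `n ≥ 0`.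
The sum on the right runs over triples `(k⃗, l, m)` with `k⃗` in the coroot lattice,
`(k⃗,k⃗)/2 + l + m = n` (i.e. `∑ k_α² + 2l + 2m = 2n`), excluding the two terms with
`k⃗ = 0` and `l = n` or `m = n`; the product `∏_{α∈Δ}` is over all ordered pairs
`p = (α,β)`, `α ≠ β`, of the factors `L_{k_β − k_α}(ε₁,ε₂, a_β − a_α)`. -/
theorem Z_eps_symmetry (K : Type*) [Field K] [CharZero K] (r : ℕ)
    (h : ∀ (e1 e2 : K) (a : Fin r → K) (n : ℕ), 1 ≤ n →
      (n : K) * e1 * Zcoeff K r n e1 (e2 - e1) a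
          + (n : K) * e2 * Zcoeff K r n (e1 - e2) e2 a
        = - ∑ᶠ t ∈ {t : (Fin r → ℤ) × ℕ × ℕ |
              (∑ α, t.1 α) = 0 ∧ (∑ α, (t.1 α) ^ 2) + 2 * t.2.1 + 2 * t.2.2 = 2 * n ∧
              ¬ (t.1 = 0 ∧ (t.2.1 = n ∨ t.2.2 = n))},
            ((t.2.1 : K) * e1 + (t.2.2 : K) * e2 + (∑ α, (t.1 α : K) * a α)
                + ((∑ α, (t.1 α : K) ^ 2) / 2) * (e1 + e2))
              * Zcoeff K r t.2.1 e1 (e2 - e1) (fun α => a α + e1 * (t.1 α : K))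
              * Zcoeff K r t.2.2 (e1 - e2) e2 (fun α => a α + e2 * (t.1 α : K))
              * (∏ p ∈ Finset.univ.filter (fun p : Fin r × Fin r => p.1 ≠ p.2),
                  Lm (t.1 p.2 - t.1 p.1) e1 e2 (a p.2 - a p.1))⁻¹) :
    ∀ (e1 : K) (a : Fin r → K) (n : ℕ),
      Zcoeff K r n e1 (-2 * e1) a = Zcoeff K r n (2 * e1) (-e1) a := by
  intro e a n
  rcases eq_or_ne e 0 with rfl | he
  · norm_num
  have hsym : ∀ n (c : Fin r → K), Zcoeff K r n e (-e - e) c = Zcoeff K r n (e - -e) (-e) c := by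
    intro n
    induction n using Nat.strong_induction_on with
    | _ n ih =>
      intro c
      rcases Nat.eq_zero_or_pos n with rfl | hn
      · rw [Zcoeff_zero, Zcoeff_zero]
      have hblowup : (n : K) * e * Zcoeff K r n e (-e - e) c
          + (n : K) * (-e) * Zcoeff K r n (e - -e) (-e) c
          = -∑ᶠ t ∈ blowupIndex r n, blowupTerm e (-e) c t := h e (-e) c n hn
      rw [finsum_blowupTerm_eq_zero ih, neg_zero] at hblowup
      have hne : (n : K) * e ≠ 0 := mul_ne_zero (Nat.cast_ne_zero.mpr hn.ne') he
      exact mul_left_cancel₀ hne (by linear_combination hblowup)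
  have hsub : -e - e = -2 * e := by ring
  have hadd : e - -e = 2 * e := by ring
  rw [← hsub, ← hadd]
  exact hsym n a
end
end
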